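/- arXiv:2502.17245 — 3 statements merged into one kernel-verified Lean document; each statement's English description precedes it below -/
import Mathlib

section
/- Let u : ℝ^d → N be Borel measurable. There exists a constant A_d > 0, depending only on d, such that for every R > 0 and all x, y ∈ ℝ^d with |x − y| ≤ R, dist_N(u(x), u(y)) ≤ A_d · ( ⨍_{B^d(x,R)} dist_N(u(x), u(z)) dz + ⨍_{B^d(y,R)} dist_N(u(y), u(z)) dz ). -/
/-!
Averaging the triangle inequality `d(u x, u y) ≤ d(u x, u z) + d(u y, u z)` over `z` in the ball
of radius `R / 2` about the midpoint of `x` and `y` gives the bound with `A_d = 2 ^ d`: that ball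
lies in both `B(x, R)` and `B(y, R)`, and its measure is `2 ^ (-d)` times theirs.
-/

open MeasureTheory Metric Module

section Midpoint

variable {E : Type*} [NormedAddCommGroup E] [NormedSpace ℝ E]

theorem ball_midpoint_half_subset_ball_left {x y : E} {R : ℝ} (h : dist x y ≤ R) :
    ball (midpoint ℝ x y) (R / 2) ⊆ ball x R := by
  refine ball_subset_ball' ?_
  rw [dist_midpoint_left, Real.norm_two]
  linarith

theorem ball_midpoint_half_subset_ball_right {x y : E} {R : ℝ} (h : dist x y ≤ R) :
    ball (midpoint ℝ x y) (R / 2) ⊆ ball y R := by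
  rw [midpoint_comm]
  exact ball_midpoint_half_subset_ball_left (dist_comm x y ▸ h)

end Midpoint

theorem MeasureTheory.Measure.addHaar_ball_two_mul {E : Type*} [NormedAddCommGroup E] [NormedSpace ℝ E]
    [MeasurableSpace E] [BorelSpace E] [FiniteDimensional ℝ E] (μ : Measure E)
    [μ.IsAddHaarMeasure] (x y : E) (r : ℝ) :
    μ (ball x (2 * r)) = ENNReal.ofReal (2 ^ finrank ℝ E) * μ (ball y r) := by
  rw [Measure.addHaar_ball_mul_of_pos μ x two_pos, Measure.addHaar_ball_center μ y]

theorem edist_mul_measure_le_setLIntegral_add {α N : Type*} [MeasurableSpace α]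
    [PseudoEMetricSpace N] [MeasurableSpace N] [OpensMeasurableSpace N] {μ : Measure α}
    {f : α → N} (hf : Measurable f) {S A B : Set α} (hA : S ⊆ A) (hB : S ⊆ B) (p q : N) :
    edist p q * μ S ≤ (∫⁻ z in A, edist p (f z) ∂μ) + ∫⁻ z in B, edist q (f z) ∂μ := by
  have hpf : Measurable fun z => edist p (f z) :=
    (continuous_const.edist continuous_id).measurable.comp hf
  calc edist p q * μ S
      = ∫⁻ _ in S, edist p q ∂μ := (setLIntegral_const _ _).symm
    _ ≤ ∫⁻ z in S, (edist p (f z) + edist q (f z)) ∂μ :=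
        lintegral_mono fun z => edist_triangle_right p q (f z)
    _ = (∫⁻ z in S, edist p (f z) ∂μ) + ∫⁻ z in S, edist q (f z) ∂μ :=
        lintegral_add_left hpf _
    _ ≤ (∫⁻ z in A, edist p (f z) ∂μ) + ∫⁻ z in B, edist q (f z) ∂μ := by
        gcongr

theorem edist_le_two_pow_finrank_mul_setLAverage_add {E N : Type*} [NormedAddCommGroup E]
    [NormedSpace ℝ E] [MeasurableSpace E] [BorelSpace E] [FiniteDimensional ℝ E]
    (μ : Measure E) [μ.IsAddHaarMeasure] [PseudoEMetricSpace N] [MeasurableSpace N]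
    [OpensMeasurableSpace N] {u : E → N} (hu : Measurable u) {R : ℝ} (hR : 0 < R) {x y : E}
    (hxy : dist x y ≤ R) :
    edist (u x) (u y)
      ≤ ENNReal.ofReal (2 ^ finrank ℝ E) *
        ((∫⁻ z in ball x R, edist (u x) (u z) ∂μ) / μ (ball x R)
          + (∫⁻ z in ball y R, edist (u y) (u z) ∂μ) / μ (ball y R)) := by
  set S := ball (midpoint ℝ x y) (R / 2)
  have hS : edist (u x) (u y) * μ S ≤
      (∫⁻ z in ball x R, edist (u x) (u z) ∂μ) + ∫⁻ z in ball y R, edist (u y) (u z) ∂μ :=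
    edist_mul_measure_le_setLIntegral_add hu (ball_midpoint_half_subset_ball_left hxy)
      (ball_midpoint_half_subset_ball_right hxy) _ _
  have hball : ∀ w, μ (ball w R) = ENNReal.ofReal (2 ^ finrank ℝ E) * μ S := fun w => by
    rw [← Measure.addHaar_ball_two_mul, mul_div_cancel₀ R two_ne_zero]
  rw [hball y, ← hball x, ENNReal.div_add_div_same, ← mul_div_assoc,
    ENNReal.le_div_iff_mul_le (Or.inl (measure_ball_pos μ x hR).ne')
      (Or.inl measure_ball_lt_top.ne), hball x, mul_left_comm]
  gcongr

theorem stmt_7_general (d : ℕ)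
    {N : Type*} [MetricSpace N]
    [MeasurableSpace N] [BorelSpace N] :
    ∃ A : ℝ, 0 < A ∧ ∀ u : EuclideanSpace ℝ (Fin d) → N, Measurable u →
      ∀ (R : ℝ), 0 < R → ∀ x y : EuclideanSpace ℝ (Fin d), dist x y ≤ R →
        edist (u x) (u y)
          ≤ ENNReal.ofReal A *
            ((∫⁻ z in Metric.ball x R, edist (u x) (u z)) / volume (Metric.ball x R)
              + (∫⁻ z in Metric.ball y R, edist (u y) (u z)) / volume (Metric.ball y R)) :=
  ⟨2 ^ d, by positivity, fun _ hu _ hR _ _ hxy => by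
    simpa only [finrank_euclideanSpace_fin] using
      edist_le_two_pow_finrank_mul_setLAverage_add volume hu hR hxy⟩

/-- There is a constant `A_d > 0`, depending only on `d`, such that for every Borel
measurable `u : ℝ^d → N`, every `R > 0` and all `x, y` with `|x - y| ≤ R`,
`dist (u x) (u y) ≤ A_d * (⨍_{B(x,R)} dist (u x) (u z) dz + ⨍_{B(y,R)} dist (u y) (u z) dz)`. -/
theorem stmt_7 (d : ℕ) (hd : 1 ≤ d)
    {N : Type*} [MetricSpace N] [CompleteSpace N] [TopologicalSpace.SeparableSpace N]
    [MeasurableSpace N] [BorelSpace N] :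
    ∃ A : ℝ, 0 < A ∧ ∀ u : EuclideanSpace ℝ (Fin d) → N, Measurable u →
      ∀ (R : ℝ), 0 < R → ∀ x y : EuclideanSpace ℝ (Fin d), dist x y ≤ R →
        edist (u x) (u y)
          ≤ ENNReal.ofReal A *
            ((∫⁻ z in Metric.ball x R, edist (u x) (u z)) / volume (Metric.ball x R)
              + (∫⁻ z in Metric.ball y R, edist (u y) (u z)) / volume (Metric.ball y R)) :=
  stmt_7_general d
end

section
/- Let u : ℝ^d → N be Borel measurable and set Θ(r) := (1/|B^d_r|) ∬_{{(x,y) ∈ ℝ^d × ℝ^d : |x − y| ≤ r}} dist_N(u(x), u(y)) dx dy for r > 0. There exists a constant C_d > 0, depending only on d, such that for every R > 0, sup_{r ∈ (0, R)} Θ(r) ≤ C_d · Θ(R). -/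
/-!
For `|x - y| ≤ r ≤ R` the ball of radius `R / 2` around the midpoint of `x` and `y` lies in both
closed balls `B̄(x, R)` and `B̄(y, R)`. Averaging the triangle inequality
`d(u x, u y) ≤ d(u x, u z) + d(u z, u y)` over `z` in that ball gives
`d(u x, u y) |B_{R/2}| ≤ Φ(x) + Φ(y)` with `Φ(x) = ∫_{B̄(x, R)} d(u x, u z) dz`.
Integrating over `|x - y| ≤ r` and using Fubini, `∫ Φ = ∬_{|x-y| ≤ R} d(u x, u y)`, so
`Θ(r) ≤ 2 |B_R| / |B_{R/2}| · Θ(R) = 2^(d+1) Θ(R)`.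
-/

open MeasureTheory Metric Set Module
open scoped ENNReal

section MetricMeasure

variable {α N : Type*} [PseudoMetricSpace α] [MeasurableSpace α] [PseudoMetricSpace N]

noncomputable def localEnergy (μ : Measure α) (u : α → N) (R : ℝ) (x : α) : ℝ≥0∞ :=
  ∫⁻ z in closedBall x R, edist (u x) (u z) ∂μ

noncomputable def pairEnergy (μ : Measure α) (u : α → N) (r : ℝ) : ℝ≥0∞ :=
  ∫⁻ p in {p : α × α | dist p.1 p.2 ≤ r}, edist (u p.1) (u p.2) ∂μ.prod μ

variable [OpensMeasurableSpace α]

theorem setLIntegral_closedBall_eq_lintegral_indicator (μ : Measure α) (g : α × α → ℝ≥0∞)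
    (r : ℝ) (x : α) :
    ∫⁻ y in closedBall x r, g (x, y) ∂μ
      = ∫⁻ y, {p : α × α | dist p.1 p.2 ≤ r}.indicator g (x, y) ∂μ := by
  rw [← lintegral_indicator measurableSet_closedBall]
  congr with y
  simp [Set.indicator, mem_closedBall, dist_comm]

variable [SecondCountableTopology α]

theorem measurableSet_dist_le (r : ℝ) : MeasurableSet {p : α × α | dist p.1 p.2 ≤ r} :=
  measurableSet_le (measurable_fst.dist measurable_snd) measurable_const

theorem Measurable.setLIntegral_closedBall (μ : Measure α) [SFinite μ] {g : α × α → ℝ≥0∞}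
    (hg : Measurable g) (r : ℝ) : Measurable fun x => ∫⁻ y in closedBall x r, g (x, y) ∂μ := by
  simp_rw [setLIntegral_closedBall_eq_lintegral_indicator]
  exact (hg.indicator (measurableSet_dist_le r)).lintegral_prod_right'

theorem setLIntegral_dist_le_eq_lintegral (μ : Measure α) [SFinite μ] {g : α × α → ℝ≥0∞}
    (hg : Measurable g) (r : ℝ) :
    ∫⁻ p in {p : α × α | dist p.1 p.2 ≤ r}, g p ∂μ.prod μ
      = ∫⁻ x, ∫⁻ y in closedBall x r, g (x, y) ∂μ ∂μ := by
  simp_rw [setLIntegral_closedBall_eq_lintegral_indicator,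
    ← lintegral_prod _ (hg.indicator (measurableSet_dist_le r)).aemeasurable]
  exact (lintegral_indicator (measurableSet_dist_le r) g).symm

theorem setLIntegral_dist_le_comp_swap (μ : Measure α) [SFinite μ] {g : α × α → ℝ≥0∞}
    (hg : Measurable g) (r : ℝ) :
    ∫⁻ p in {p : α × α | dist p.1 p.2 ≤ r}, g p.swap ∂μ.prod μ
      = ∫⁻ p in {p : α × α | dist p.1 p.2 ≤ r}, g p ∂μ.prod μ := by
  have hswap : Prod.swap ⁻¹' {p : α × α | dist p.1 p.2 ≤ r} = {p | dist p.1 p.2 ≤ r} := by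
    ext p
    simp [dist_comm]
  rw [← Measure.measurePreserving_swap.setLIntegral_comp_preimage (measurableSet_dist_le r) hg,
    hswap]

variable [MeasurableSpace N] [BorelSpace N] [SecondCountableTopology N]

theorem pairEnergy_eq_lintegral_localEnergy (μ : Measure α) [SFinite μ] {u : α → N}
    (hu : Measurable u) (R : ℝ) :
    pairEnergy μ u R = ∫⁻ x, localEnergy μ u R x ∂μ :=
  setLIntegral_dist_le_eq_lintegral μ ((hu.comp measurable_fst).edist (hu.comp measurable_snd)) R

theorem measurable_localEnergy (μ : Measure α) [SFinite μ] {u : α → N} (hu : Measurable u)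
    (R : ℝ) : Measurable (localEnergy μ u R) :=
  ((hu.comp measurable_fst).edist (hu.comp measurable_snd)).setLIntegral_closedBall μ R

end MetricMeasure

section HaarMeasure

variable {E N : Type*} [NormedAddCommGroup E] [NormedSpace ℝ E]

theorem ball_midpoint_subset_closedBall_left {x y : E} {R : ℝ} (h : dist x y ≤ R) :
    ball (midpoint ℝ x y) (R / 2) ⊆ closedBall x R := by
  refine ball_subset_closedBall.trans (closedBall_subset_closedBall' ?_)
  rw [dist_comm, dist_left_midpoint (𝕜 := ℝ), Real.norm_two]
  linarith

theorem ball_midpoint_subset_closedBall_right {x y : E} {R : ℝ} (h : dist x y ≤ R) :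
    ball (midpoint ℝ x y) (R / 2) ⊆ closedBall y R := by
  rw [midpoint_comm]
  exact ball_midpoint_subset_closedBall_left (by rwa [dist_comm])

variable [MeasurableSpace E] [BorelSpace E] (μ : Measure E) [μ.IsAddHaarMeasure]
  [PseudoMetricSpace N] [MeasurableSpace N] [BorelSpace N] [SecondCountableTopology N] {u : E → N}

theorem edist_mul_addHaar_ball_le_localEnergy (hu : Measurable u) {x y : E} {R : ℝ}
    (h : dist x y ≤ R) :
    edist (u x) (u y) * μ (ball 0 (R / 2)) ≤ localEnergy μ u R x + localEnergy μ u R y := by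
  set m := midpoint ℝ x y
  calc edist (u x) (u y) * μ (ball 0 (R / 2))
      = ∫⁻ _ in ball m (R / 2), edist (u x) (u y) ∂μ := by
        rw [setLIntegral_const, Measure.addHaar_ball_center μ m]
    _ ≤ ∫⁻ z in ball m (R / 2), (edist (u x) (u z) + edist (u y) (u z)) ∂μ :=
        setLIntegral_mono' measurableSet_ball fun z _ => edist_triangle_right _ _ _
    _ = (∫⁻ z in ball m (R / 2), edist (u x) (u z) ∂μ)
          + ∫⁻ z in ball m (R / 2), edist (u y) (u z) ∂μ :=
        lintegral_add_left (measurable_const.edist hu) _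
    _ ≤ localEnergy μ u R x + localEnergy μ u R y :=
        add_le_add (lintegral_mono_set (ball_midpoint_subset_closedBall_left h))
          (lintegral_mono_set (ball_midpoint_subset_closedBall_right h))

variable [FiniteDimensional ℝ E]

theorem addHaar_closedBall_eq_addHaar_ball_of_pos (x : E) {r : ℝ} (hr : 0 < r) :
    μ (closedBall x r) = μ (ball x r) := by
  rw [Measure.addHaar_closedBall μ x hr.le, Measure.addHaar_ball_of_pos μ x hr]

theorem addHaar_ball_eq_two_pow_mul_addHaar_ball_half (R : ℝ) :
    μ (ball (0 : E) R) = 2 ^ finrank ℝ E * μ (ball (0 : E) (R / 2)) := by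
  have h := Measure.addHaar_ball_mul_of_pos μ (0 : E) two_pos (R / 2)
  rwa [mul_div_cancel₀ R two_ne_zero, ENNReal.ofReal_pow zero_le_two, ENNReal.ofReal_ofNat] at h

theorem setLIntegral_dist_le_comp_fst {f : E → ℝ≥0∞} (hf : Measurable f) (r : ℝ) :
    ∫⁻ p in {p : E × E | dist p.1 p.2 ≤ r}, f p.1 ∂μ.prod μ
      = (∫⁻ x, f x ∂μ) * μ (closedBall 0 r) := by
  rw [setLIntegral_dist_le_eq_lintegral μ (g := fun p => f p.1) (hf.comp measurable_fst),
    ← lintegral_mul_const _ hf]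
  simp_rw [setLIntegral_const, Measure.addHaar_closedBall_center]

theorem pairEnergy_mul_addHaar_ball_le (hu : Measurable u) {r R : ℝ} (hrR : r ≤ R) :
    pairEnergy μ u r * μ (ball 0 (R / 2)) ≤ 2 * μ (closedBall 0 r) * pairEnergy μ u R := by
  have hΦ := measurable_localEnergy μ hu R
  calc pairEnergy μ u r * μ (ball 0 (R / 2))
      = ∫⁻ p in {p : E × E | dist p.1 p.2 ≤ r},
          edist (u p.1) (u p.2) * μ (ball 0 (R / 2)) ∂μ.prod μ :=
        (lintegral_mul_const _ ((hu.comp measurable_fst).edist (hu.comp measurable_snd))).symm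
    _ ≤ ∫⁻ p in {p : E × E | dist p.1 p.2 ≤ r},
          (localEnergy μ u R p.1 + localEnergy μ u R p.2) ∂μ.prod μ :=
        setLIntegral_mono' (measurableSet_dist_le r) fun p hp =>
          edist_mul_addHaar_ball_le_localEnergy μ hu (le_trans hp hrR)
    _ = (∫⁻ p in {p : E × E | dist p.1 p.2 ≤ r}, localEnergy μ u R p.1 ∂μ.prod μ)
          + ∫⁻ p in {p : E × E | dist p.1 p.2 ≤ r}, localEnergy μ u R p.2 ∂μ.prod μ :=
        lintegral_add_left (hΦ.comp measurable_fst) _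
    _ = 2 * ∫⁻ p in {p : E × E | dist p.1 p.2 ≤ r}, localEnergy μ u R p.1 ∂μ.prod μ := by
        rw [← setLIntegral_dist_le_comp_swap μ (g := fun p => localEnergy μ u R p.1)
          (hΦ.comp measurable_fst) r, two_mul]
        rfl
    _ = 2 * μ (closedBall 0 r) * pairEnergy μ u R := by
        rw [setLIntegral_dist_le_comp_fst μ hΦ, pairEnergy_eq_lintegral_localEnergy μ hu]
        ring

theorem pairEnergy_div_addHaar_ball_le (hu : Measurable u) {r R : ℝ} (hr : 0 < r)
    (hrR : r ≤ R) :
    pairEnergy μ u r / μ (ball 0 r)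
      ≤ 2 ^ (finrank ℝ E + 1) * (pairEnergy μ u R / μ (ball 0 R)) := by
  have hR : 0 < R := hr.trans_le hrR
  have hball_ne_zero : ∀ s : ℝ, 0 < s → μ (ball (0 : E) s) ≠ 0 := fun s hs =>
    (measure_ball_pos μ 0 hs).ne'
  rw [ENNReal.div_le_iff_le_mul (Or.inl (hball_ne_zero r hr)) (Or.inl measure_ball_lt_top.ne),
    ← ENNReal.mul_le_mul_iff_left (hball_ne_zero _ (half_pos hR)) measure_ball_lt_top.ne]
  calc pairEnergy μ u r * μ (ball 0 (R / 2))
      ≤ 2 * μ (ball 0 r) * pairEnergy μ u R := by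
        rw [← addHaar_closedBall_eq_addHaar_ball_of_pos μ 0 hr]
        exact pairEnergy_mul_addHaar_ball_le μ hu hrR
    _ = 2 * μ (ball 0 r) * pairEnergy μ u R * (μ (ball 0 R) * (μ (ball 0 R))⁻¹) := by
        rw [ENNReal.mul_inv_cancel (hball_ne_zero R hR) measure_ball_lt_top.ne, mul_one]
    _ = 2 ^ (finrank ℝ E + 1) * (pairEnergy μ u R / μ (ball 0 R)) * μ (ball 0 r)
          * μ (ball 0 (R / 2)) := by
        rw [div_eq_mul_inv, addHaar_ball_eq_two_pow_mul_addHaar_ball_half μ R]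
        ring

end HaarMeasure

theorem stmt_10_general (d : ℕ)
    {N : Type*} [MetricSpace N] [TopologicalSpace.SeparableSpace N]
    [MeasurableSpace N] [BorelSpace N] :
    ∃ C : ℝ, 0 < C ∧ ∀ u : EuclideanSpace ℝ (Fin d) → N, Measurable u →
      ∀ R : ℝ, 0 < R →
        (⨆ r ∈ Set.Ioo (0 : ℝ) R,
            (∫⁻ p in {p : EuclideanSpace ℝ (Fin d) × EuclideanSpace ℝ (Fin d) |
                dist p.1 p.2 ≤ r}, edist (u p.1) (u p.2))
              / volume (Metric.ball (0 : EuclideanSpace ℝ (Fin d)) r))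
          ≤ ENNReal.ofReal C
              * ((∫⁻ p in {p : EuclideanSpace ℝ (Fin d) × EuclideanSpace ℝ (Fin d) |
                    dist p.1 p.2 ≤ R}, edist (u p.1) (u p.2))
                  / volume (Metric.ball (0 : EuclideanSpace ℝ (Fin d)) R)) := by
  have := UniformSpace.secondCountable_of_separable N
  refine ⟨2 ^ (d + 1), by positivity, fun u hu R _ => iSup₂_le fun r hr => ?_⟩
  have h := pairEnergy_div_addHaar_ball_le volume hu hr.1 hr.2.le
  rw [finrank_euclideanSpace_fin] at h
  rwa [ENNReal.ofReal_pow zero_le_two, ENNReal.ofReal_ofNat]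

/-- With `Θ(r) = (1/|B^d_r|) ∬_{|x-y| ≤ r} dist (u x) (u y)`, there is a constant
`C_d > 0`, depending only on `d`, such that `sup_{r ∈ (0,R)} Θ(r) ≤ C_d Θ(R)`. -/
theorem stmt_10 (d : ℕ) (hd : 1 ≤ d)
    {N : Type*} [MetricSpace N] [CompleteSpace N] [TopologicalSpace.SeparableSpace N]
    [MeasurableSpace N] [BorelSpace N] :
    ∃ C : ℝ, 0 < C ∧ ∀ u : EuclideanSpace ℝ (Fin d) → N, Measurable u →
      ∀ R : ℝ, 0 < R →
        (⨆ r ∈ Set.Ioo (0 : ℝ) R,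
            (∫⁻ p in {p : EuclideanSpace ℝ (Fin d) × EuclideanSpace ℝ (Fin d) |
                dist p.1 p.2 ≤ r}, edist (u p.1) (u p.2))
              / volume (Metric.ball (0 : EuclideanSpace ℝ (Fin d)) r))
          ≤ ENNReal.ofReal C
              * ((∫⁻ p in {p : EuclideanSpace ℝ (Fin d) × EuclideanSpace ℝ (Fin d) |
                    dist p.1 p.2 ≤ R}, edist (u p.1) (u p.2))
                  / volume (Metric.ball (0 : EuclideanSpace ℝ (Fin d)) R)) :=
  stmt_10_general d
end

section
/- (Scaling lemma.) Let u : ℝ^d → N be Borel measurable. For all 0 < ℓ ≤ L, (1/L^{d+1}) ∬_{{(x,y) ∈ ℝ^d × ℝ^d : |x − y| ≤ L}} dist_N(u(x), u(y)) dx dy ≤ (2^{d+1}/ℓ^{d+1}) ∬_{{(x,y) ∈ ℝ^d × ℝ^d : |x − y| ≤ ℓ}} dist_N(u(x), u(y)) dx dy. -/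
/-!
Write `E(r)` for the integral of `edist (u x) (u y)` over the pairs with `|x - y| ≤ r`.
Splitting `edist (u x) (u y)` by the triangle inequality through `u` of the midpoint `m` of `x`
and `y`, and substituting `m` for `y` (resp. for `x`), with Jacobian `2 ^ d`, gives the doubling
inequality `E(2r) ≤ 2 ^ (d + 1) E(r)`. Iterating it `n + 1` times, where `2 ^ n ≤ L / ℓ < 2 ^ (n + 1)`,
and using that `E` is monotone gives `E(L) ≤ (2L / ℓ) ^ (d + 1) E(ℓ)`.
-/

open MeasureTheory Set Module
open scoped ENNReal

theorem measurable_midpoint {E : Type*} [NormedAddCommGroup E] [NormedSpace ℝ E]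
    [MeasurableSpace E] [BorelSpace E] [SecondCountableTopology E] :
    Measurable fun p : E × E => midpoint ℝ p.1 p.2 := by
  simp_rw [midpoint_eq_smul_add]
  fun_prop

section Midpoint

variable {E : Type*} [NormedAddCommGroup E] [NormedSpace ℝ E] [FiniteDimensional ℝ E]
  [MeasurableSpace E] [BorelSpace E] (μ : Measure E) [μ.IsAddHaarMeasure]

theorem map_smul_two_inv_addHaar :
    Measure.map ((2⁻¹ : ℝ) • ·) μ = (2 : ℝ≥0∞) ^ finrank ℝ E • μ := by
  rw [Measure.map_addHaar_smul μ (by norm_num : (2⁻¹ : ℝ) ≠ 0)]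
  simp [ENNReal.ofReal_pow]

theorem lintegral_comp_midpoint_right {F : E → ℝ≥0∞} (hF : Measurable F) (x : E) :
    ∫⁻ y, F (midpoint ℝ x y) ∂μ = 2 ^ finrank ℝ E * ∫⁻ z, F z ∂μ := by
  simp_rw [midpoint_eq_smul_add, invOf_eq_inv]
  rw [lintegral_add_left_eq_self (fun y => F ((2⁻¹ : ℝ) • y)) x,
    ← lintegral_map hF (measurable_const_smul _), map_smul_two_inv_addHaar,
    lintegral_smul_measure, smul_eq_mul]

theorem lintegral_prod_comp_midpoint_right {F : E × E → ℝ≥0∞} (hF : Measurable F) :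
    ∫⁻ p, F (p.1, midpoint ℝ p.1 p.2) ∂μ.prod μ = 2 ^ finrank ℝ E * ∫⁻ p, F p ∂μ.prod μ := by
  have hFm : Measurable fun p : E × E => F (p.1, midpoint ℝ p.1 p.2) :=
    hF.comp (measurable_fst.prodMk measurable_midpoint)
  rw [lintegral_prod _ hFm.aemeasurable, lintegral_prod _ hF.aemeasurable,
    ← lintegral_const_mul _ hF.lintegral_prod_right']
  exact lintegral_congr fun x => lintegral_comp_midpoint_right μ (hF.comp measurable_prodMk_left) x

theorem lintegral_prod_comp_midpoint_left {F : E × E → ℝ≥0∞} (hF : Measurable F) :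
    ∫⁻ p, F (midpoint ℝ p.1 p.2, p.2) ∂μ.prod μ = 2 ^ finrank ℝ E * ∫⁻ p, F p ∂μ.prod μ := by
  rw [← lintegral_prod_swap, ← lintegral_prod_swap F,
    ← lintegral_prod_comp_midpoint_right μ (F := fun p => F p.swap) (hF.comp measurable_swap)]
  simp only [Prod.fst_swap, Prod.snd_swap, Prod.swap_prod_mk, midpoint_comm]

end Midpoint

noncomputable def nonlocalEnergy {E N : Type*} [PseudoMetricSpace E] [MeasurableSpace E]
    [PseudoEMetricSpace N] (μ : Measure E) (u : E → N) (r : ℝ) : ℝ≥0∞ :=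
  ∫⁻ p in {p : E × E | dist p.1 p.2 ≤ r}, edist (u p.1) (u p.2) ∂μ.prod μ

theorem nonlocalEnergy_mono {E N : Type*} [PseudoMetricSpace E] [MeasurableSpace E]
    [PseudoEMetricSpace N] (μ : Measure E) (u : E → N) {r s : ℝ} (hrs : r ≤ s) :
    nonlocalEnergy μ u r ≤ nonlocalEnergy μ u s :=
  lintegral_mono_set fun _ hp => le_trans hp hrs

section Scaling

variable {E : Type*} [NormedAddCommGroup E] [NormedSpace ℝ E] [FiniteDimensional ℝ E]
  [MeasurableSpace E] [BorelSpace E] (μ : Measure E) [μ.IsAddHaarMeasure]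
  {N : Type*} [PseudoEMetricSpace N] [SecondCountableTopology N] [MeasurableSpace N]
  [OpensMeasurableSpace N] {u : E → N}

theorem nonlocalEnergy_two_mul_le (hu : Measurable u) (r : ℝ) :
    nonlocalEnergy μ u (2 * r) ≤ 2 ^ (finrank ℝ E + 1) * nonlocalEnergy μ u r := by
  have hS : ∀ s : ℝ, MeasurableSet {p : E × E | dist p.1 p.2 ≤ s} := fun s =>
    measurableSet_le (by fun_prop) measurable_const
  set f : E × E → ℝ≥0∞ := fun p => edist (u p.1) (u p.2)
  set G := {p : E × E | dist p.1 p.2 ≤ r}.indicator f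
  have hG : Measurable G :=
    ((hu.comp measurable_fst).edist (hu.comp measurable_snd)).indicator (hS r)
  have hG₁ : Measurable fun p : E × E => G (p.1, midpoint ℝ p.1 p.2) :=
    hG.comp (measurable_fst.prodMk measurable_midpoint)
  have htriangle : ∀ p : E × E, {p : E × E | dist p.1 p.2 ≤ 2 * r}.indicator f p ≤
      G (p.1, midpoint ℝ p.1 p.2) + G (midpoint ℝ p.1 p.2, p.2) := by
    rintro ⟨x, y⟩
    by_cases hxy : dist x y ≤ 2 * r
    · have hx : dist x (midpoint ℝ x y) ≤ r := by
        rw [dist_left_midpoint, Real.norm_two]; linarith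
      have hy : dist (midpoint ℝ x y) y ≤ r := by
        rw [dist_midpoint_right, Real.norm_two]; linarith
      simp only [G, f, indicator, mem_ofPred_eq, hxy, hx, hy, if_true]
      exact edist_triangle _ _ _
    · simp [f, indicator, hxy]
  calc nonlocalEnergy μ u (2 * r)
      = ∫⁻ p, {p : E × E | dist p.1 p.2 ≤ 2 * r}.indicator f p ∂μ.prod μ :=
        (lintegral_indicator (hS _) f).symm
    _ ≤ ∫⁻ p, G (p.1, midpoint ℝ p.1 p.2) + G (midpoint ℝ p.1 p.2, p.2) ∂μ.prod μ :=
        lintegral_mono htriangle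
    _ = 2 ^ finrank ℝ E * ∫⁻ p, G p ∂μ.prod μ + 2 ^ finrank ℝ E * ∫⁻ p, G p ∂μ.prod μ := by
        rw [lintegral_add_left hG₁, lintegral_prod_comp_midpoint_right μ hG,
          lintegral_prod_comp_midpoint_left μ hG]
    _ = 2 ^ (finrank ℝ E + 1) * nonlocalEnergy μ u r := by
        rw [lintegral_indicator (hS r), pow_succ, nonlocalEnergy]
        ring

theorem nonlocalEnergy_two_pow_mul_le (hu : Measurable u) (r : ℝ) (k : ℕ) :
    nonlocalEnergy μ u (2 ^ k * r) ≤ 2 ^ ((finrank ℝ E + 1) * k) * nonlocalEnergy μ u r := by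
  induction k with
  | zero => simp
  | succ k ih =>
    calc nonlocalEnergy μ u (2 ^ (k + 1) * r)
        = nonlocalEnergy μ u (2 * (2 ^ k * r)) := by ring_nf
      _ ≤ 2 ^ (finrank ℝ E + 1) * (2 ^ ((finrank ℝ E + 1) * k) * nonlocalEnergy μ u r) :=
        (nonlocalEnergy_two_mul_le μ hu _).trans (mul_le_mul_right ih _)
      _ = 2 ^ ((finrank ℝ E + 1) * (k + 1)) * nonlocalEnergy μ u r := by ring

theorem nonlocalEnergy_le_of_le (hu : Measurable u) {ℓ L : ℝ} (hℓ : 0 < ℓ) (hℓL : ℓ ≤ L) :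
    nonlocalEnergy μ u L
      ≤ ENNReal.ofReal ((2 * L / ℓ) ^ (finrank ℝ E + 1)) * nonlocalEnergy μ u ℓ := by
  obtain ⟨n, hn, hn'⟩ := exists_nat_pow_near ((one_le_div hℓ).2 hℓL) one_lt_two
  have hL : L ≤ 2 ^ (n + 1) * ℓ := ((div_lt_iff₀ hℓ).1 hn').le
  have hpow : (2 : ℝ) ^ (n + 1) ≤ 2 * L / ℓ := by
    rw [pow_succ, mul_div_assoc]; linarith
  calc nonlocalEnergy μ u L
      ≤ nonlocalEnergy μ u (2 ^ (n + 1) * ℓ) := nonlocalEnergy_mono μ u hL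
    _ ≤ 2 ^ ((finrank ℝ E + 1) * (n + 1)) * nonlocalEnergy μ u ℓ :=
        nonlocalEnergy_two_pow_mul_le μ hu ℓ (n + 1)
    _ = ENNReal.ofReal ((2 ^ (n + 1)) ^ (finrank ℝ E + 1)) * nonlocalEnergy μ u ℓ := by
        rw [ENNReal.ofReal_pow (by positivity), ENNReal.ofReal_pow zero_le_two,
          ENNReal.ofReal_ofNat, ← pow_mul, mul_comm (n + 1)]
    _ ≤ ENNReal.ofReal ((2 * L / ℓ) ^ (finrank ℝ E + 1)) * nonlocalEnergy μ u ℓ := by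
        gcongr

end Scaling

theorem stmt_12_general (d : ℕ)
    {N : Type*} [MetricSpace N] [TopologicalSpace.SeparableSpace N]
    [MeasurableSpace N] [BorelSpace N]
    (u : EuclideanSpace ℝ (Fin d) → N) (hu : Measurable u)
    (ℓ L : ℝ) (hℓ : 0 < ℓ) (hℓL : ℓ ≤ L) :
    (∫⁻ p in {p : EuclideanSpace ℝ (Fin d) × EuclideanSpace ℝ (Fin d) |
        dist p.1 p.2 ≤ L}, edist (u p.1) (u p.2))
      / ENNReal.ofReal (L ^ (d + 1))
    ≤ ENNReal.ofReal (2 ^ (d + 1) / ℓ ^ (d + 1))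
        * ∫⁻ p in {p : EuclideanSpace ℝ (Fin d) × EuclideanSpace ℝ (Fin d) |
            dist p.1 p.2 ≤ ℓ}, edist (u p.1) (u p.2) := by
  have : SecondCountableTopology N := UniformSpace.secondCountable_of_separable N
  have hL : 0 < L := hℓ.trans_le hℓL
  have hcoef : 2 ^ (d + 1) / ℓ ^ (d + 1) * L ^ (d + 1) = (2 * L / ℓ) ^ (d + 1) := by
    rw [div_pow, mul_pow]; ring
  rw [ENNReal.div_le_iff (by positivity) ENNReal.ofReal_ne_top, mul_right_comm,
    ← ENNReal.ofReal_mul (by positivity), hcoef]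
  simpa only [nonlocalEnergy, finrank_euclideanSpace_fin, ← Measure.volume_eq_prod] using
    nonlocalEnergy_le_of_le volume hu hℓ hℓL

/-- Scaling lemma: for `0 < ℓ ≤ L`,
`(1/L^{d+1}) ∬_{|x-y| ≤ L} dist (u x) (u y) ≤ (2^{d+1}/ℓ^{d+1}) ∬_{|x-y| ≤ ℓ} dist (u x) (u y)`. -/
theorem stmt_12 (d : ℕ) (hd : 1 ≤ d)
    {N : Type*} [MetricSpace N] [CompleteSpace N] [TopologicalSpace.SeparableSpace N]
    [MeasurableSpace N] [BorelSpace N]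
    (u : EuclideanSpace ℝ (Fin d) → N) (hu : Measurable u)
    (ℓ L : ℝ) (hℓ : 0 < ℓ) (hℓL : ℓ ≤ L) :
    (∫⁻ p in {p : EuclideanSpace ℝ (Fin d) × EuclideanSpace ℝ (Fin d) |
        dist p.1 p.2 ≤ L}, edist (u p.1) (u p.2))
      / ENNReal.ofReal (L ^ (d + 1))
    ≤ ENNReal.ofReal (2 ^ (d + 1) / ℓ ^ (d + 1))
        * ∫⁻ p in {p : EuclideanSpace ℝ (Fin d) × EuclideanSpace ℝ (Fin d) |
            dist p.1 p.2 ≤ ℓ}, edist (u p.1) (u p.2) :=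
  stmt_12_general d u hu ℓ L hℓ hℓL
end
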